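/- Let σ > 0, m > 0 and let φ : [0,T] → ℓ²(ℤ^N) be a twice continuously differentiable solution of the conservative DKG equation φ̈ − Δ_d φ + m φ − F(φ) = 0 whose initial energy satisfies H(0) ≤ 0, and suppose φ(t) ≠ 0 for all t ∈ [0,T]. Then the function μ(t) = ‖φ(t)‖²_{ℓ²} is twice continuously differentiable and satisfies the differential inequality μ″(t) μ(t) ≥ ((σ+2)/2) (μ′(t))² for all t ∈ [0,T]. -/

import Mathlib

/-!
Energy conservation keeps `H(t) ≤ 0`: differentiating `H` along the solution uses summation by
parts for `Δ_d` and the Fréchet derivative `(2σ+2) F` of the potential `P(u) = Σ_n |u_n|^{2σ+2}`,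
which follows from a second-order Taylor bound for `|y|^{2σ+2}`. Since
`μ'' = 2(‖φ̇‖² + ⟪φ, φ̈⟫)` and, by the equation, `⟪φ, φ̈⟫ = P - Σ_κ ‖∇⁺_κ φ‖² - m‖φ‖²`, the bound
`H ≤ 0` gives `μ'' ≥ 2(σ+2)‖φ̇‖²`, and Cauchy–Schwarz `(μ')² ≤ 4 μ ‖φ̇‖²` finishes.
-/

noncomputable section

open scoped ENNReal InnerProductSpace

/-- The lattice `ℤ^N`. -/
abbrev ZLat (N : ℕ) := Fin N → ℤ

/-- The space `ℓ²(ℤ^N)` of real square-summable sequences. -/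
abbrev ellTwo (N : ℕ) := lp (fun _ : ZLat N => ℝ) 2

/-- The `κ`-th standard basis vector of `ℤ^N`. -/
def evec (N : ℕ) (κ : Fin N) : ZLat N := fun j => if j = κ then 1 else 0

lemma memℓp_shift {N : ℕ} (v : ZLat N) (φ : ellTwo N) :
    Memℓp (fun n => φ (n + v)) 2 := by
  have h2 : (0:ℝ) < (2 : ℝ≥0∞).toReal := by norm_num
  rw [memℓp_gen_iff h2]
  have h := (memℓp_gen_iff h2).mp (lp.memℓp φ)
  exact ((Equiv.addRight v).summable_iff (f := fun n => ‖φ n‖ ^ (2:ℝ≥0∞).toReal)).2 h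

/-- The shift operator `(S_v φ)_n = φ_{n+v}` on `ℓ²(ℤ^N)`. -/
def shiftOp {N : ℕ} (v : ZLat N) (φ : ellTwo N) : ellTwo N :=
  ⟨fun n => φ (n + v), memℓp_shift v φ⟩

/-- The forward difference operator `(∇⁺_κ φ)_n = φ_{n+e_κ} - φ_n`. -/
def fdiff {N : ℕ} (κ : Fin N) (φ : ellTwo N) : ellTwo N := shiftOp (evec N κ) φ - φ

/-- The discrete Laplacian on `ℓ²(ℤ^N)`:
`(Δ_d φ)_n = Σ_κ (φ_{n+e_κ} + φ_{n-e_κ}) - 2N φ_n`. -/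
def discLap {N : ℕ} (φ : ellTwo N) : ellTwo N :=
  (∑ κ : Fin N, (shiftOp (evec N κ) φ + shiftOp (-(evec N κ)) φ)) - ((2 * N : ℝ) • φ)

lemma memℓp_F {N : ℕ} (σ : ℝ) (hσ : 0 ≤ σ) (φ : ellTwo N) :
    Memℓp (fun n => |φ n| ^ (2 * σ) * φ n) 2 := by
  have h2 : (0:ℝ) < (2 : ℝ≥0∞).toReal := by norm_num
  rw [memℓp_gen_iff h2]
  have hφ := (memℓp_gen_iff h2).mp (lp.memℓp φ)
  refine Summable.of_nonneg_of_le (fun n => Real.rpow_nonneg (norm_nonneg _) _)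
    (f := fun n => (‖φ‖ ^ (2*σ)) ^ (2:ℝ≥0∞).toReal * ‖φ n‖ ^ (2:ℝ≥0∞).toReal) ?_ ?_
  · intro n
    have h1 : |φ n| ≤ ‖φ‖ := by
      simpa [Real.norm_eq_abs] using lp.norm_apply_le_norm (p := 2) (by norm_num) φ n
    have h0 : (0:ℝ) ≤ |φ n| := abs_nonneg _
    have hC : |φ n| ^ (2*σ) ≤ ‖φ‖ ^ (2*σ) := Real.rpow_le_rpow h0 h1 (by positivity)
    have hb : ‖|φ n| ^ (2*σ) * φ n‖ ≤ ‖φ‖ ^ (2*σ) * ‖φ n‖ := by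
      rw [norm_mul, Real.norm_eq_abs, abs_of_nonneg (Real.rpow_nonneg h0 _)]
      exact mul_le_mul_of_nonneg_right hC (norm_nonneg _)
    calc ‖|φ n| ^ (2*σ) * φ n‖ ^ (2:ℝ≥0∞).toReal
        ≤ (‖φ‖ ^ (2*σ) * ‖φ n‖) ^ (2:ℝ≥0∞).toReal :=
          Real.rpow_le_rpow (norm_nonneg _) hb (by norm_num)
      _ = (‖φ‖ ^ (2*σ)) ^ (2:ℝ≥0∞).toReal * ‖φ n‖ ^ (2:ℝ≥0∞).toReal :=
          Real.mul_rpow (Real.rpow_nonneg (norm_nonneg _) _) (norm_nonneg _)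
  · exact hφ.mul_left _

/-- The power-law nonlinearity `(F(φ))_n = |φ_n|^{2σ} φ_n` as a map on `ℓ²(ℤ^N)`. -/
def Fpow {N : ℕ} (σ : ℝ) (hσ : 0 ≤ σ) (φ : ellTwo N) : ellTwo N :=
  ⟨fun n => |φ n| ^ (2 * σ) * φ n, memℓp_F σ hσ φ⟩

/-- The Hamiltonian (total energy)
`H(t) = ½‖φ̇(t)‖² + ½(Σ_κ ‖∇⁺_κ φ(t)‖² + m‖φ(t)‖²) - (1/(2σ+2)) Σ_n |φ_n(t)|^{2σ+2}`. -/
def energyH {N : ℕ} (σ m : ℝ) (φ φ' : ℝ → ellTwo N) (t : ℝ) : ℝ :=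
  1/2 * ‖φ' t‖ ^ 2
    + 1/2 * (∑ κ : Fin N, ‖fdiff κ (φ t)‖ ^ 2 + m * ‖φ t‖ ^ 2)
    - (1/(2*σ+2)) * ∑' n : ZLat N, |(φ t) n| ^ (2*σ+2)


section Scalar

variable {q : ℝ}

lemma abs_rpow_mul_self_mul_self (hq : 0 ≤ q) (y : ℝ) : |y| ^ q * y * y = |y| ^ (q + 2) := by
  rcases eq_or_ne y 0 with rfl | hy
  · simp [Real.zero_rpow (by positivity : q + 2 ≠ 0)]
  · rw [mul_assoc, ← sq, ← sq_abs, Real.rpow_add (abs_pos.2 hy), Real.rpow_two]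

lemma hasDerivAt_abs_rpow_mul_self (hq : 0 < q) (x : ℝ) :
    HasDerivAt (fun y => |y| ^ q * y) ((q + 1) * |x| ^ q) x := by
  rcases eq_or_ne x 0 with rfl | hx
  · -- the difference quotient is `|y| ^ q`, which tends to `0`
    rw [hasDerivAt_iff_tendsto_slope, abs_zero, Real.zero_rpow hq.ne', mul_zero]
    have hcont : Filter.Tendsto (fun y : ℝ => |y| ^ q) (nhds 0) (nhds 0) := by
      simpa [Real.zero_rpow hq.ne'] using
        (continuous_abs.rpow_const fun _ => Or.inr hq.le).tendsto (0 : ℝ)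
    refine (hcont.mono_left nhdsWithin_le_nhds).congr' ?_
    filter_upwards [self_mem_nhdsWithin] with y (hy : y ≠ 0)
    rw [slope_def_field]
    field_simp
    simp
  · have h := ((hasDerivAt_abs hx).rpow_const (p := q) (Or.inl (abs_ne_zero.2 hx))).fun_mul
      (hasDerivAt_id' x)
    refine h.congr_deriv ?_
    have habs : |x| ≠ 0 := abs_ne_zero.2 hx
    rw [Real.rpow_sub_one habs]
    calc _ = q * (|x| ^ q / |x| * |x|) + |x| ^ q := by
          linear_combination (q * (|x| ^ q / |x|)) * sign_mul_self x
      _ = (q + 1) * |x| ^ q := by rw [div_mul_cancel₀ _ habs]; ring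

lemma abs_abs_rpow_mul_self_sub_le (hq : 0 < q) {R x y : ℝ} (hx : |x| ≤ R) (hy : |y| ≤ R) :
    |(|y| ^ q * y) - |x| ^ q * x| ≤ (q + 1) * R ^ q * |y - x| := by
  have hmem : ∀ {z : ℝ}, |z| ≤ R → z ∈ Set.Icc (-R) R := fun h => abs_le.1 h
  have hderiv_le : ∀ z ∈ Set.Icc (-R) R, ‖(q + 1) * |z| ^ q‖ ≤ (q + 1) * R ^ q := by
    intro z hz
    rw [Real.norm_eq_abs, abs_of_nonneg (by positivity)]
    gcongr
    exact abs_le.2 hz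
  simpa [Real.norm_eq_abs] using (convex_Icc (-R) R).norm_image_sub_le_of_norm_hasDerivWithin_le
    (fun z _ => (hasDerivAt_abs_rpow_mul_self hq z).hasDerivWithinAt) hderiv_le (hmem hx) (hmem hy)

lemma hasDerivAt_abs_rpow_add_two (hq : 0 < q) (x : ℝ) :
    HasDerivAt (fun y => |y| ^ (q + 2)) ((q + 2) * (|x| ^ q * x)) x := by
  have h := (hasDerivAt_abs_rpow_mul_self hq x).fun_mul (hasDerivAt_id' x)
  simp only [abs_rpow_mul_self_mul_self hq.le] at h
  exact h.congr_deriv (by ring)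

lemma abs_abs_rpow_add_two_sub_sub_le (hq : 0 < q) {R a b : ℝ} (ha : |a| ≤ R) (hb : |b| ≤ R) :
    |(|b| ^ (q + 2) - |a| ^ (q + 2) - (q + 2) * (|a| ^ q * a) * (b - a))|
      ≤ (q + 2) * (q + 1) * R ^ q * (b - a) ^ 2 := by
  have hsub : Set.uIcc a b ⊆ Set.Icc (-R) R := Set.uIcc_subset_Icc (abs_le.1 ha) (abs_le.1 hb)
  have hderiv : ∀ z, HasDerivAt (fun y => |y| ^ (q + 2) - (q + 2) * (|a| ^ q * a) * y)
      ((q + 2) * (|z| ^ q * z - |a| ^ q * a)) z := fun z =>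
    ((hasDerivAt_abs_rpow_add_two hq z).fun_sub
      ((hasDerivAt_id' z).const_mul ((q + 2) * (|a| ^ q * a)))).congr_deriv (by ring)
  have hderiv_le : ∀ z ∈ Set.uIcc a b,
      ‖(q + 2) * (|z| ^ q * z - |a| ^ q * a)‖ ≤ (q + 2) * ((q + 1) * R ^ q * |b - a|) := by
    intro z hz
    rw [Real.norm_eq_abs, abs_mul, abs_of_pos (by positivity)]
    gcongr
    calc _ ≤ (q + 1) * R ^ q * |z - a| :=
          abs_abs_rpow_mul_self_sub_le hq ha (abs_le.2 (hsub hz))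
      _ ≤ (q + 1) * R ^ q * |b - a| := by
          have hR : 0 ≤ R := (abs_nonneg a).trans ha
          exact mul_le_mul_of_nonneg_left (Set.abs_sub_left_of_mem_uIcc hz) (by positivity)
  have hmvt := (convex_uIcc a b).norm_image_sub_le_of_norm_hasDerivWithin_le
    (fun z _ => (hderiv z).hasDerivWithinAt) hderiv_le Set.left_mem_uIcc Set.right_mem_uIcc
  rw [Real.norm_eq_abs, Real.norm_eq_abs] at hmvt
  calc _ = _ := by ring_nf
    _ ≤ _ := hmvt
    _ = _ := by rw [← sq_abs (b - a)]; ring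

end Scalar

section Lattice

variable {N : ℕ}

lemma shiftOp_apply (v : ZLat N) (u : ellTwo N) (n : ZLat N) : shiftOp v u n = u (n + v) := rfl

lemma hasSum_mul (u w : ellTwo N) : HasSum (fun n => u n * w n) ⟪u, w⟫_ℝ := by
  simpa [RCLike.inner_apply, mul_comm] using lp.hasSum_inner (𝕜 := ℝ) u w

lemma hasSum_sq (u : ellTwo N) : HasSum (fun n => u n ^ 2) (‖u‖ ^ 2) := by
  simpa [← sq, real_inner_self_eq_norm_sq] using hasSum_mul u u

lemma inner_shiftOp_left (v : ZLat N) (u w : ellTwo N) :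
    ⟪shiftOp v u, w⟫_ℝ = ⟪u, shiftOp (-v) w⟫_ℝ := by
  rw [← (hasSum_mul _ _).tsum_eq, ← (hasSum_mul _ _).tsum_eq]
  conv_rhs => rw [← (Equiv.addRight v).tsum_eq]
  simp [shiftOp_apply, add_assoc]

lemma shiftOp_shiftOp (a b : ZLat N) (u : ellTwo N) :
    shiftOp a (shiftOp b u) = shiftOp (b + a) u := by
  ext n
  simp [shiftOp_apply, add_assoc, add_comm a b]

lemma shiftOp_zero (u : ellTwo N) : shiftOp 0 u = u := by
  ext n
  simp [shiftOp_apply]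

lemma inner_shiftOp_shiftOp (v : ZLat N) (u w : ellTwo N) :
    ⟪shiftOp v u, shiftOp v w⟫_ℝ = ⟪u, w⟫_ℝ := by
  rw [inner_shiftOp_left, shiftOp_shiftOp, add_neg_cancel, shiftOp_zero]

lemma norm_shiftOp (v : ZLat N) (u : ellTwo N) : ‖shiftOp v u‖ = ‖u‖ := by
  rw [← sq_eq_sq₀ (norm_nonneg _) (norm_nonneg _), ← real_inner_self_eq_norm_sq,
    ← real_inner_self_eq_norm_sq, inner_shiftOp_shiftOp]

def shiftLinearIsometry (v : ZLat N) : ellTwo N →ₗᵢ[ℝ] ellTwo N where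
  toFun := shiftOp v
  map_add' _ _ := rfl
  map_smul' _ _ := rfl
  norm_map' := norm_shiftOp v

lemma HasDerivWithinAt.fdiff {φ : ℝ → ellTwo N} {φ' : ellTwo N} {s : Set ℝ} {t : ℝ}
    (hφ : HasDerivWithinAt φ φ' s t) (κ : Fin N) :
    HasDerivWithinAt (fun r => fdiff κ (φ r)) (fdiff κ φ') s t :=
  ((shiftLinearIsometry (evec N κ)).toContinuousLinearMap.hasFDerivAt.comp_hasDerivWithinAt
    t hφ).sub hφ

lemma inner_fdiff_fdiff (κ : Fin N) (u w : ellTwo N) :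
    ⟪fdiff κ u, fdiff κ w⟫_ℝ
      = 2 * ⟪u, w⟫_ℝ - (⟪shiftOp (evec N κ) u, w⟫_ℝ + ⟪u, shiftOp (evec N κ) w⟫_ℝ) := by
  rw [fdiff, fdiff, inner_sub_left, inner_sub_right, inner_sub_right, inner_shiftOp_shiftOp]
  ring

lemma inner_discLap_left (u w : ellTwo N) :
    ⟪discLap u, w⟫_ℝ
      = ∑ κ : Fin N, (⟪shiftOp (evec N κ) u, w⟫_ℝ + ⟪u, shiftOp (evec N κ) w⟫_ℝ)
        - 2 * N * ⟪u, w⟫_ℝ := by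
  rw [discLap, inner_sub_left, sum_inner, real_inner_smul_left]
  congr 1
  refine Finset.sum_congr rfl fun κ _ => ?_
  rw [inner_add_left, inner_shiftOp_left (-_), neg_neg]

lemma sum_inner_fdiff_fdiff (u w : ellTwo N) :
    ∑ κ : Fin N, ⟪fdiff κ u, fdiff κ w⟫_ℝ = -⟪discLap u, w⟫_ℝ := by
  simp only [inner_fdiff_fdiff, inner_discLap_left, Finset.sum_sub_distrib, ← Finset.mul_sum,
    Finset.sum_const, Finset.card_univ, Fintype.card_fin, nsmul_eq_mul]
  ring

end Lattice

section Potential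

variable {N : ℕ} {σ : ℝ}

def potential (σ : ℝ) (u : ellTwo N) : ℝ := ∑' n, |u n| ^ (2 * σ + 2)

lemma Fpow_apply (hσ : 0 ≤ σ) (u : ellTwo N) (n : ZLat N) :
    Fpow σ hσ u n = |u n| ^ (2 * σ) * u n := rfl

lemma hasSum_potential (hσ : 0 ≤ σ) (u : ellTwo N) :
    HasSum (fun n => |u n| ^ (2 * σ + 2)) ⟪Fpow σ hσ u, u⟫_ℝ := by
  simpa only [Fpow_apply, abs_rpow_mul_self_mul_self (by positivity : 0 ≤ 2 * σ)] using
    hasSum_mul (Fpow σ hσ u) u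

lemma inner_Fpow_self (hσ : 0 ≤ σ) (u : ellTwo N) : ⟪Fpow σ hσ u, u⟫_ℝ = potential σ u :=
  (hasSum_potential hσ u).tsum_eq.symm

lemma abs_potential_sub_sub_le (hσ : 0 < σ) (u v : ellTwo N) :
    |potential σ u - potential σ v - (2 * σ + 2) * ⟪Fpow σ hσ.le v, u - v⟫_ℝ|
      ≤ (2 * σ + 2) * (2 * σ + 1) * (‖u‖ + ‖v‖) ^ (2 * σ) * ‖u - v‖ ^ 2 := by
  have hsum := ((hasSum_potential hσ.le u).sub (hasSum_potential hσ.le v)).sub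
    ((hasSum_mul (Fpow σ hσ.le v) (u - v)).mul_left (2 * σ + 2))
  rw [← inner_Fpow_self hσ.le, ← inner_Fpow_self hσ.le, ← hsum.tsum_eq, ← Real.norm_eq_abs]
  refine tsum_of_norm_bounded ((hasSum_sq (u - v)).mul_left _) fun n => ?_
  have hR : ∀ {w : ellTwo N}, ‖w‖ ≤ ‖u‖ + ‖v‖ → |w n| ≤ ‖u‖ + ‖v‖ :=
    fun h => (lp.norm_apply_le_norm two_ne_zero _ n).trans h
  have := abs_abs_rpow_add_two_sub_sub_le (by positivity : 0 < 2 * σ)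
    (hR (le_add_of_nonneg_left (norm_nonneg u))) (hR (le_add_of_nonneg_right (norm_nonneg v)))
  simpa [Fpow_apply, mul_assoc] using this

open Asymptotics in
lemma hasFDerivAt_potential (hσ : 0 < σ) (v : ellTwo N) :
    HasFDerivAt (potential σ) ((2 * σ + 2) • innerSL ℝ (Fpow σ hσ.le v)) v := by
  refine HasFDerivAt.of_isLittleO (IsBigO.trans_isLittleO ?_ (isLittleO_pow_sub_sub v one_lt_two))
  have hnear : ∀ᶠ u in nhds v, ‖u‖ ≤ ‖v‖ + 1 :=
    (continuous_norm.tendsto v).eventually (ge_mem_nhds (lt_add_one ‖v‖))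
  refine IsBigO.of_bound ((2 * σ + 2) * (2 * σ + 1) * (2 * ‖v‖ + 1) ^ (2 * σ)) ?_
  filter_upwards [hnear] with u hu
  rw [Real.norm_eq_abs, Real.norm_eq_abs, abs_of_nonneg (by positivity : (0 : ℝ) ≤ ‖u - v‖ ^ 2),
    FunLike.coe_smul, Pi.smul_apply, innerSL_apply_apply, smul_eq_mul]
  refine (abs_potential_sub_sub_le hσ u v).trans ?_
  gcongr _ * ?_ ^ _ * _
  linarith

end Potential

section Energy

variable {N : ℕ} {σ m : ℝ}

lemma hasDerivWithinAt_energyH (hσ : 0 < σ) {φ φ' : ℝ → ellTwo N} {φ'' : ellTwo N}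
    {s : Set ℝ} {t : ℝ} (hφ : HasDerivWithinAt φ (φ' t) s t)
    (hφ' : HasDerivWithinAt φ' φ'' s t) :
    HasDerivWithinAt (energyH σ m φ φ')
      ⟪φ' t, φ'' - discLap (φ t) + m • φ t - Fpow σ hσ.le (φ t)⟫_ℝ s t := by
  have hkin := hφ'.norm_sq
  have hgrad := HasDerivWithinAt.fun_sum fun κ (_ : κ ∈ Finset.univ) => (hφ.fdiff κ).norm_sq
  have hmass := hφ.norm_sq
  have hpot := (hasFDerivAt_potential hσ (φ t)).comp_hasDerivWithinAt t hφ
  refine (((hkin.const_mul (1 / 2)).add ((hgrad.add (hmass.const_mul m)).const_mul (1 / 2))).sub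
    (hpot.const_mul (1 / (2 * σ + 2)))).congr_deriv ?_
  have hparts : ∑ κ : Fin N, 2 * ⟪fdiff κ (φ t), fdiff κ (φ' t)⟫_ℝ
      = -(2 * ⟪discLap (φ t), φ' t⟫_ℝ) := by
    rw [← Finset.mul_sum, sum_inner_fdiff_fdiff, mul_neg]
  simp only [hparts, FunLike.coe_smul, Pi.smul_apply, innerSL_apply_apply,
    smul_eq_mul, inner_sub_right, inner_add_right, real_inner_smul_right]
  rw [real_inner_comm (φ t), real_inner_comm (discLap _), real_inner_comm (Fpow _ _ _)]
  field_simp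
  ring

lemma energyH_eq_energyH_zero (hσ : 0 < σ) {T : ℝ} {φ φ' φ'' : ℝ → ellTwo N}
    (hd1 : ∀ t ∈ Set.Icc (0:ℝ) T, HasDerivWithinAt φ (φ' t) (Set.Icc (0:ℝ) T) t)
    (hd2 : ∀ t ∈ Set.Icc (0:ℝ) T, HasDerivWithinAt φ' (φ'' t) (Set.Icc (0:ℝ) T) t)
    (heq : ∀ t ∈ Set.Icc (0:ℝ) T,
      φ'' t - discLap (φ t) + m • φ t - Fpow σ hσ.le (φ t) = 0)
    {t : ℝ} (ht : t ∈ Set.Icc (0:ℝ) T) :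
    energyH σ m φ φ' t = energyH σ m φ φ' 0 := by
  have hconst := (convex_Icc (0:ℝ) T).norm_image_sub_le_of_norm_hasDerivWithin_le
    (fun r hr => by
      simpa [heq r hr] using hasDerivWithinAt_energyH (m := m) hσ (hd1 r hr) (hd2 r hr))
    (fun _ _ => norm_zero.le) ⟨le_rfl, ht.1.trans ht.2⟩ ht
  rwa [zero_mul, norm_le_zero_iff, sub_eq_zero] at hconst

end Energy

section Virial

variable {N : ℕ} {σ m : ℝ}

lemma inner_discLap_self (u : ellTwo N) : ⟪u, discLap u⟫_ℝ = -∑ κ : Fin N, ‖fdiff κ u‖ ^ 2 := by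
  simp only [← real_inner_self_eq_norm_sq, sum_inner_fdiff_fdiff, neg_neg, real_inner_comm]

lemma mul_norm_sq_le_of_energyH_nonpos (hσ : 0 < σ) (hm : 0 ≤ m) {φ φ' : ℝ → ellTwo N}
    {t : ℝ} {φ'' : ellTwo N} (heq : φ'' - discLap (φ t) + m • φ t - Fpow σ hσ.le (φ t) = 0)
    (hH : energyH σ m φ φ' t ≤ 0) :
    (σ + 2) * ‖φ' t‖ ^ 2 ≤ ‖φ' t‖ ^ 2 + ⟪φ t, φ''⟫_ℝ := by
  have hφ'' : φ'' = discLap (φ t) - m • φ t + Fpow σ hσ.le (φ t) := by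
    rw [← sub_eq_zero, ← heq]; abel
  have hinner : ⟪φ t, φ''⟫_ℝ
      = -∑ κ : Fin N, ‖fdiff κ (φ t)‖ ^ 2 - m * ‖φ t‖ ^ 2 + potential σ (φ t) := by
    rw [hφ'', inner_add_right, inner_sub_right, inner_discLap_self, real_inner_smul_right,
      real_inner_self_eq_norm_sq, real_inner_comm, inner_Fpow_self]
  have hgrad : 0 ≤ ∑ κ : Fin N, ‖fdiff κ (φ t)‖ ^ 2 := by positivity
  have hmass : 0 ≤ m * ‖φ t‖ ^ 2 := by positivity
  have hpot : (σ + 1) * (‖φ' t‖ ^ 2 + ∑ κ : Fin N, ‖fdiff κ (φ t)‖ ^ 2 + m * ‖φ t‖ ^ 2)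
      ≤ potential σ (φ t) := by
    unfold energyH at hH
    have h2σ : 0 < 2 * σ + 2 := by positivity
    rw [← potential] at hH
    field_simp at hH
    linarith
  rw [hinner]
  nlinarith

end Virial

theorem dkg_mu_differential_inequality_general (N : ℕ) (σ m T : ℝ) (hσ : 0 < σ) (hm : 0 < m)
    (φ φ' φ'' : ℝ → ellTwo N)
    (hd1 : ∀ t ∈ Set.Icc (0:ℝ) T, HasDerivWithinAt φ (φ' t) (Set.Icc (0:ℝ) T) t)
    (hd2 : ∀ t ∈ Set.Icc (0:ℝ) T, HasDerivWithinAt φ' (φ'' t) (Set.Icc (0:ℝ) T) t)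
    (hcont : ContinuousOn φ'' (Set.Icc (0:ℝ) T))
    (heq : ∀ t ∈ Set.Icc (0:ℝ) T,
      φ'' t - discLap (φ t) + m • φ t - Fpow σ hσ.le (φ t) = 0)
    (hH0 : energyH σ m φ φ' 0 ≤ 0) :
    ∃ μ' μ'' : ℝ → ℝ,
      (∀ t ∈ Set.Icc (0:ℝ) T,
        HasDerivWithinAt (fun s => ‖φ s‖ ^ 2) (μ' t) (Set.Icc (0:ℝ) T) t) ∧
      (∀ t ∈ Set.Icc (0:ℝ) T, HasDerivWithinAt μ' (μ'' t) (Set.Icc (0:ℝ) T) t) ∧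
      ContinuousOn μ'' (Set.Icc (0:ℝ) T) ∧
      ∀ t ∈ Set.Icc (0:ℝ) T, (σ+2)/2 * (μ' t) ^ 2 ≤ μ'' t * ‖φ t‖ ^ 2 := by
  have hH : ∀ t ∈ Set.Icc (0:ℝ) T, energyH σ m φ φ' t ≤ 0 := fun t ht =>
    (energyH_eq_energyH_zero hσ hd1 hd2 heq ht).trans_le hH0
  refine ⟨fun t => 2 * ⟪φ t, φ' t⟫_ℝ, fun t => 2 * (‖φ' t‖ ^ 2 + ⟪φ t, φ'' t⟫_ℝ),
    fun t ht => (hd1 t ht).norm_sq, fun t ht => ?_, ?_, fun t ht => ?_⟩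
  · refine (((hd1 t ht).inner ℝ (hd2 t ht)).const_mul 2).congr_deriv ?_
    rw [real_inner_self_eq_norm_sq, add_comm]
  · have hφ : ContinuousOn φ (Set.Icc 0 T) := fun t ht => (hd1 t ht).continuousWithinAt
    have hφ' : ContinuousOn φ' (Set.Icc 0 T) := fun t ht => (hd2 t ht).continuousWithinAt
    exact continuousOn_const.mul ((hφ'.norm.pow 2).add (hφ.inner hcont))
  · have hvirial := mul_norm_sq_le_of_energyH_nonpos hσ hm.le (heq t ht) (hH t ht)
    have hcs : ⟪φ t, φ' t⟫_ℝ ^ 2 ≤ ‖φ t‖ ^ 2 * ‖φ' t‖ ^ 2 := by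
      rw [← mul_pow, ← sq_abs]
      exact pow_le_pow_left₀ (abs_nonneg _) (abs_real_inner_le_norm _ _) 2
    nlinarith [sq_nonneg ‖φ t‖]

/-- For a solution of the conservative DKG equation `φ̈ - Δ_d φ + m φ - F(φ) = 0` with
nonpositive initial energy and `φ(t) ≠ 0`, the function `μ(t) = ‖φ(t)‖²` is twice
continuously differentiable and satisfies `μ″ μ ≥ ((σ+2)/2)(μ′)²` on `[0,T]`. -/
theorem dkg_mu_differential_inequality (N : ℕ) (σ m T : ℝ) (hσ : 0 < σ) (hm : 0 < m)
    (hT : 0 < T) (φ φ' φ'' : ℝ → ellTwo N)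
    (hd1 : ∀ t ∈ Set.Icc (0:ℝ) T, HasDerivWithinAt φ (φ' t) (Set.Icc (0:ℝ) T) t)
    (hd2 : ∀ t ∈ Set.Icc (0:ℝ) T, HasDerivWithinAt φ' (φ'' t) (Set.Icc (0:ℝ) T) t)
    (hcont : ContinuousOn φ'' (Set.Icc (0:ℝ) T))
    (heq : ∀ t ∈ Set.Icc (0:ℝ) T,
      φ'' t - discLap (φ t) + m • φ t - Fpow σ hσ.le (φ t) = 0)
    (hH0 : energyH σ m φ φ' 0 ≤ 0)
    (hne : ∀ t ∈ Set.Icc (0:ℝ) T, φ t ≠ 0) :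
    ∃ μ' μ'' : ℝ → ℝ,
      (∀ t ∈ Set.Icc (0:ℝ) T,
        HasDerivWithinAt (fun s => ‖φ s‖ ^ 2) (μ' t) (Set.Icc (0:ℝ) T) t) ∧
      (∀ t ∈ Set.Icc (0:ℝ) T, HasDerivWithinAt μ' (μ'' t) (Set.Icc (0:ℝ) T) t) ∧
      ContinuousOn μ'' (Set.Icc (0:ℝ) T) ∧
      ∀ t ∈ Set.Icc (0:ℝ) T, (σ+2)/2 * (μ' t) ^ 2 ≤ μ'' t * ‖φ t‖ ^ 2 :=
  dkg_mu_differential_inequality_general N σ m T hσ hm φ φ' φ'' hd1 hd2 hcont heq hH0
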